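/- Let $f : \mathbb{R} \to \mathbb{R}$ be continuous with $f(t) = 0$ for $t \le 0$, and suppose $t \mapsto f(t)/t$ is strictly increasing on $(0, +\infty)$. Define $F(t) = \int_0^t f(\tau)\, d\tau$. Then the function $t \mapsto f(t) t - 2 F(t)$ is strictly increasing on $(0, +\infty)$. -/

import Mathlib

/-! With `c = f t₂ / t₂`, monotonicity of `f t / t` bounds `f` by the line `c τ` on `[t₁, t₂]`, so
`f t₁ t₁ < c t₁²` and `2 (F t₂ - F t₁) ≤ c (t₂² - t₁²)`; adding them gives
`f t₁ t₁ + 2 (F t₂ - F t₁) < c t₂² = f t₂ t₂`. -/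

open Set

section DivMonotone

variable {f : ℝ → ℝ}

theorem le_div_mul_of_monotoneOn_div (hmono : MonotoneOn (fun t => f t / t) (Ioi 0))
    {τ b : ℝ} (hτ : 0 < τ) (hτb : τ ≤ b) : f τ ≤ f b / b * τ :=
  calc f τ = f τ / τ * τ := (div_mul_cancel₀ _ hτ.ne').symm
    _ ≤ f b / b * τ :=
      mul_le_mul_of_nonneg_right (hmono hτ (hτ.trans_le hτb) hτb) hτ.le

theorem integral_le_of_monotoneOn_div (hmono : MonotoneOn (fun t => f t / t) (Ioi 0))
    {a b : ℝ} (hf : IntervalIntegrable f MeasureTheory.volume a b) (ha : 0 < a) (hab : a ≤ b) :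
    ∫ τ in a..b, f τ ≤ f b / b * (b ^ 2 - a ^ 2) / 2 :=
  calc ∫ τ in a..b, f τ ≤ ∫ τ in a..b, f b / b * τ :=
        intervalIntegral.integral_mono_on hab hf
          ((continuous_const.mul continuous_id).intervalIntegrable _ _)
          fun τ hτ => le_div_mul_of_monotoneOn_div hmono (ha.trans_le hτ.1) hτ.2
    _ = f b / b * (b ^ 2 - a ^ 2) / 2 := by
        rw [intervalIntegral.integral_const_mul, integral_id]
        ring

end DivMonotone

open intervalIntegral in
theorem stmt_1_general (f : ℝ → ℝ) (hf : Continuous f)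
    (hmono : StrictMonoOn (fun t => f t / t) (Set.Ioi (0 : ℝ)))
    (F : ℝ → ℝ) (hF : ∀ t, F t = ∫ τ in (0 : ℝ)..t, f τ) :
    StrictMonoOn (fun t => f t * t - 2 * F t) (Set.Ioi (0 : ℝ)) := by
  intro t₁ (h₁ : 0 < t₁) t₂ (h₂ : 0 < t₂) h₁₂
  have hleft : f t₁ * t₁ < f t₂ / t₂ * t₁ ^ 2 :=
    calc f t₁ * t₁ = f t₁ / t₁ * t₁ ^ 2 := by field_simp
      _ < f t₂ / t₂ * t₁ ^ 2 := mul_lt_mul_of_pos_right (hmono h₁ h₂ h₁₂) (pow_pos h₁ 2)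
  have hright : f t₂ = f t₂ / t₂ * t₂ := (div_mul_cancel₀ _ h₂.ne').symm
  have hincr : F t₂ - F t₁ = ∫ τ in t₁..t₂, f τ := by
    rw [hF, hF, integral_interval_sub_left (hf.intervalIntegrable _ _) (hf.intervalIntegrable _ _)]
  have hint := integral_le_of_monotoneOn_div hmono.monotoneOn (hf.intervalIntegrable t₁ t₂) h₁
    h₁₂.le
  show f t₁ * t₁ - 2 * F t₁ < f t₂ * t₂ - 2 * F t₂
  nlinarith

open intervalIntegral in
theorem stmt_1 (f : ℝ → ℝ) (hf : Continuous f)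
    (hf0 : ∀ t ≤ (0 : ℝ), f t = 0)
    (hmono : StrictMonoOn (fun t => f t / t) (Set.Ioi (0 : ℝ)))
    (F : ℝ → ℝ) (hF : ∀ t, F t = ∫ τ in (0 : ℝ)..t, f τ) :
    StrictMonoOn (fun t => f t * t - 2 * F t) (Set.Ioi (0 : ℝ)) :=
  stmt_1_general f hf hmono F hF
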